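/- Let 0<q<1 and 0<α<1, and for an integer k≥0 set N_q(k) := 1/Γ_q(αk+1) − Γ_q(1−α)/Γ_q(α(k−1)+1). Then for every integer k≥0 one has N_q(k) ≤ (1−q)^{(α−1)k}/Γ_q(k+1). -/

import Mathlib

open scoped BigOperators

/-- The infinite q-Pochhammer symbol `(a;q)_∞ = ∏_{j=0}^∞ (1 - q^j a)`. -/
noncomputable def qPochInf (q a : ℝ) : ℝ := ∏' j : ℕ, (1 - q ^ j * a)

/-- The q-gamma function `Γ_q(x) = ((q;q)_∞/(q^x;q)_∞)·(1-q)^{1-x}`. -/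
noncomputable def qGamma (q x : ℝ) : ℝ :=
  (qPochInf q q / qPochInf q (q ^ x)) * (1 - q) ^ (1 - x)

/-- `N_q(k) = 1/Γ_q(αk+1) − Γ_q(1−α)/Γ_q(α(k−1)+1)`. -/
noncomputable def Nq (q α : ℝ) (k : ℕ) : ℝ :=
  1 / qGamma q (α * k + 1) - qGamma q (1 - α) / qGamma q (α * ((k : ℝ) - 1) + 1)

/-!
Proof idea: the subtracted term of `N_q(k)` is nonnegative, so `N_q(k) ≤ 1/Γ_q(αk+1)`. By the
definition of `Γ_q`, `(1-q)^{-x}/Γ_q(x+1) = (q^{x+1};q)_∞/(q;q)_∞`, and `a ↦ (a;q)_∞` is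
antitone on `a < 1` (each factor `1 - q^j a` is positive and antitone), so this quantity is
monotone in `x > -1`. Comparing `x = αk` with `x = k` gives the bound.
-/

open Real

section qPochhammer

variable {q a : ℝ}

lemma one_sub_pow_mul_pos (hq0 : 0 ≤ q) (hq1 : q ≤ 1) (ha : a < 1) (j : ℕ) :
    0 < 1 - q ^ j * a := by
  have h0 : 0 ≤ q ^ j := pow_nonneg hq0 j
  have h1 : q ^ j ≤ 1 := pow_le_one₀ hq0 hq1
  rcases le_or_gt 0 a with ha0 | ha0 <;> nlinarith

lemma summable_log_one_sub_pow_mul (hq0 : 0 ≤ q) (hq1 : q < 1) (a : ℝ) :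
    Summable fun j : ℕ => log (1 - q ^ j * a) := by
  simpa [sub_eq_add_neg] using Real.summable_log_one_add_of_summable
    ((summable_geometric_of_lt_one hq0 hq1).mul_right a).neg

lemma qPochInf_eq_exp_tsum_log (hq0 : 0 ≤ q) (hq1 : q < 1) (ha : a < 1) :
    qPochInf q a = exp (∑' j : ℕ, log (1 - q ^ j * a)) :=
  (rexp_tsum_eq_tprod (one_sub_pow_mul_pos hq0 hq1.le ha)
    (summable_log_one_sub_pow_mul hq0 hq1 a)).symm

lemma qPochInf_pos (hq0 : 0 ≤ q) (hq1 : q < 1) (ha : a < 1) : 0 < qPochInf q a := by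
  rw [qPochInf_eq_exp_tsum_log hq0 hq1 ha]
  exact exp_pos _

lemma qPochInf_antitoneOn (hq0 : 0 ≤ q) (hq1 : q < 1) : AntitoneOn (qPochInf q) (Set.Iio 1) := by
  intro a ha b hb hab
  rw [qPochInf_eq_exp_tsum_log hq0 hq1 ha, qPochInf_eq_exp_tsum_log hq0 hq1 hb, exp_le_exp]
  refine Summable.tsum_le_tsum (fun j => ?_) (summable_log_one_sub_pow_mul hq0 hq1 b)
    (summable_log_one_sub_pow_mul hq0 hq1 a)
  refine log_le_log (one_sub_pow_mul_pos hq0 hq1.le hb j) ?_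
  gcongr

end qPochhammer

section qGamma

variable {q x y : ℝ}

lemma qGamma_pos (hq0 : 0 < q) (hq1 : q < 1) (hx : 0 < x) : 0 < qGamma q x := by
  have hqx : q ^ x < 1 := rpow_lt_one hq0.le hq1 hx
  unfold qGamma
  have := qPochInf_pos hq0.le hq1 hq1
  have := qPochInf_pos hq0.le hq1 hqx
  have : 0 < (1 - q) ^ (1 - x) := rpow_pos_of_pos (by linarith) _
  positivity

lemma rpow_neg_div_qGamma_add_one (hq1 : q < 1) (x : ℝ) :
    (1 - q) ^ (-x) / qGamma q (x + 1) = qPochInf q (q ^ (x + 1)) / qPochInf q q := by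
  have : (1 - q) ^ (-x) ≠ 0 := (rpow_pos_of_pos (by linarith) _).ne'
  rw [qGamma, show 1 - (x + 1) = -x by ring]
  field_simp

lemma monotoneOn_rpow_neg_div_qGamma_add_one (hq0 : 0 < q) (hq1 : q < 1) :
    MonotoneOn (fun x => (1 - q) ^ (-x) / qGamma q (x + 1)) (Set.Ioi (-1)) := by
  intro x hx y hy hxy
  simp only [rpow_neg_div_qGamma_add_one hq1]
  have hpos := qPochInf_pos hq0.le hq1 hq1
  gcongr
  refine qPochInf_antitoneOn hq0.le hq1 ?_ ?_ ?_
  · exact rpow_lt_one hq0.le hq1 (by linarith [Set.mem_Ioi.mp hy])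
  · exact rpow_lt_one hq0.le hq1 (by linarith [Set.mem_Ioi.mp hx])
  · exact rpow_le_rpow_of_exponent_ge hq0 hq1.le (by linarith)

lemma one_div_qGamma_add_one_le (hq0 : 0 < q) (hq1 : q < 1) (hy : -1 < y) (hyx : y ≤ x) :
    1 / qGamma q (y + 1) ≤ (1 - q) ^ (y - x) / qGamma q (x + 1) := by
  have hq : 0 < 1 - q := by linarith
  have hmono := monotoneOn_rpow_neg_div_qGamma_add_one hq0 hq1 hy (hy.trans_le hyx) hyx
  calc 1 / qGamma q (y + 1) = (1 - q) ^ y * ((1 - q) ^ (-y) / qGamma q (y + 1)) := by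
        rw [rpow_neg hq.le]
        field_simp [(rpow_pos_of_pos hq y).ne']
    _ ≤ (1 - q) ^ y * ((1 - q) ^ (-x) / qGamma q (x + 1)) := by
        gcongr
    _ = (1 - q) ^ (y - x) / qGamma q (x + 1) := by
        rw [rpow_sub hq, rpow_neg hq.le]
        ring

end qGamma

lemma Nq_le_one_div_qGamma {q α : ℝ} (hq0 : 0 < q) (hq1 : q < 1) (hα0 : 0 ≤ α) (hα1 : α < 1)
    (k : ℕ) : Nq q α k ≤ 1 / qGamma q (α * k + 1) := by
  have hk : (0 : ℝ) ≤ k := k.cast_nonneg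
  have h1 := qGamma_pos hq0 hq1 (x := 1 - α) (by linarith)
  have h2 := qGamma_pos hq0 hq1 (x := α * ((k : ℝ) - 1) + 1) (by nlinarith)
  rw [Nq]
  linarith [div_nonneg h1.le h2.le]

theorem Nq_upper_bound (q α : ℝ) (hq0 : 0 < q) (hq1 : q < 1)
    (hα0 : 0 < α) (hα1 : α < 1) :
    ∀ k : ℕ, Nq q α k ≤ (1 - q) ^ ((α - 1) * k) / qGamma q ((k : ℝ) + 1) := by
  intro k
  have hk : (0 : ℝ) ≤ k := k.cast_nonneg
  calc Nq q α k ≤ 1 / qGamma q (α * k + 1) := Nq_le_one_div_qGamma hq0 hq1 hα0.le hα1 k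
    _ ≤ (1 - q) ^ (α * k - k) / qGamma q ((k : ℝ) + 1) :=
        one_div_qGamma_add_one_le hq0 hq1 (by nlinarith) (by nlinarith)
    _ = (1 - q) ^ ((α - 1) * k) / qGamma q ((k : ℝ) + 1) := by ring_nf
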